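/- arXiv:2410.10677 — 3 statements merged into one kernel-verified Lean document; each statement's English description precedes it below -/
import Mathlib

section
/- Let M be a metric space, Y a normed linear space, and x ∈ M. The map Φ_x : ℓ_∞(M, Y) → Lip^x(M, Y), defined by Φ_x(f)(x') = d(x', x)·f(x') + f(x), is a surjective linear isometry from (ℓ_∞(M,Y), ‖·‖_∞) onto (Lip^x(M, Y), ‖·‖_{L^x}). -/
open scoped Topology

section

variable {M Y : Type*} [MetricSpace M] [NormedAddCommGroup Y] [NormedSpace ℝ Y]

/-- `f` is Lipschitz at `x`. -/
def LipAt (x : M) (f : M → Y) : Prop :=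
  ∃ k > (0 : ℝ), ∀ x' : M, ‖f x' - f x‖ ≤ k * dist x' x

/-- `f` is a bounded function. -/
def IsBddFun (f : M → Y) : Prop := ∃ C : ℝ, ∀ x' : M, ‖f x'‖ ≤ C

/-- sup norm `‖f‖_∞`. -/
noncomputable def supNorm (f : M → Y) : ℝ := ⨆ x' : M, ‖f x'‖

/-- the seminorm `‖f‖_x`. -/
noncomputable def normAt (x : M) (f : M → Y) : ℝ :=
  ⨆ x' : {x' : M // x' ≠ x}, ‖f x'.1 - f x‖ / dist x'.1 x

/-- the norm `‖f‖_{L^x} = max {‖f‖_x, ‖f(x)‖}`. -/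
noncomputable def normLAt (x : M) (f : M → Y) : ℝ := max (normAt x f) ‖f x‖

/-- The map `Φ_x`. -/
noncomputable def PhiMap (x : M) (f : M → Y) : M → Y :=
  fun x' => dist x' x • f x' + f x

end

/-! `Φ_x f` differs from the constant `f x` by `d(·, x) • f`, so its difference quotients at
`x` are exactly the values of `f` away from `x`, and its value at `x` is `f x`: hence
`‖Φ_x f‖_{L^x}` is the supremum of `‖f‖`. The inverse divides the increment `g x' - g x` by
`d(x', x)`, which is bounded precisely when `g` is Lipschitz at `x`. -/

open Set

lemma max_iSup_ne_eq_iSup {ι : Type*} (g : ι → ℝ) (hg : BddAbove (range g)) (i : ι)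
    (hi : 0 ≤ g i) : max (⨆ j : {j // j ≠ i}, g j) (g i) = ⨆ j, g j := by
  have hle : g i ≤ ⨆ j, g j := le_ciSup hg i
  apply le_antisymm
  · refine max_le (Real.iSup_le (fun j => le_ciSup hg j.1) (hi.trans hle)) hle
  · have hbdd : BddAbove (range fun j : {j // j ≠ i} => g j) :=
      hg.mono (range_subset_iff.2 fun j => mem_range_self j.1)
    refine Real.iSup_le (fun j => ?_) (hi.trans (le_max_right _ _))
    by_cases hj : j = i
    · exact hj ▸ le_max_right _ _
    · exact (le_ciSup hbdd ⟨j, hj⟩).trans (le_max_left _ _)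

lemma IsBddFun.bddAbove_range_norm {M Y : Type*} [NormedAddCommGroup Y] {f : M → Y}
    (hf : IsBddFun f) : BddAbove (range fun x' => ‖f x'‖) := by
  obtain ⟨C, hC⟩ := hf
  exact ⟨C, forall_mem_range.2 hC⟩

section

variable {M Y : Type*} [MetricSpace M] [NormedAddCommGroup Y] [NormedSpace ℝ Y]

lemma PhiMap_self (x : M) (f : M → Y) : PhiMap x f x = f x := by
  simp [PhiMap]

lemma PhiMap_sub_self (x x' : M) (f : M → Y) :
    PhiMap x f x' - PhiMap x f x = dist x' x • f x' := by
  simp [PhiMap]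

lemma norm_PhiMap_sub_self (x x' : M) (f : M → Y) :
    ‖PhiMap x f x' - PhiMap x f x‖ = ‖f x'‖ * dist x' x := by
  rw [PhiMap_sub_self, norm_smul, Real.norm_of_nonneg dist_nonneg, mul_comm]

lemma PhiMap_add (x : M) (f g : M → Y) : PhiMap x (f + g) = PhiMap x f + PhiMap x g := by
  funext x'
  simp only [PhiMap, Pi.add_apply, smul_add]
  abel

lemma PhiMap_smul (x : M) (c : ℝ) (f : M → Y) : PhiMap x (c • f) = c • PhiMap x f := by
  funext x'
  simp only [PhiMap, Pi.smul_apply, smul_add, smul_comm (dist x' x) c]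

lemma IsBddFun.lipAt_PhiMap (x : M) {f : M → Y} (hf : IsBddFun f) : LipAt x (PhiMap x f) := by
  obtain ⟨C, hC⟩ := hf
  refine ⟨max C 1, lt_max_of_lt_right one_pos, fun x' => ?_⟩
  rw [norm_PhiMap_sub_self]
  exact mul_le_mul_of_nonneg_right ((hC x').trans (le_max_left _ _)) dist_nonneg

lemma normAt_PhiMap (x : M) (f : M → Y) :
    normAt x (PhiMap x f) = ⨆ x' : {x' : M // x' ≠ x}, ‖f x'‖ := by
  refine iSup_congr fun x' => ?_
  rw [norm_PhiMap_sub_self, mul_div_cancel_right₀ _ (dist_pos.2 x'.2).ne']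

lemma IsBddFun.normLAt_PhiMap (x : M) {f : M → Y} (hf : IsBddFun f) :
    normLAt x (PhiMap x f) = supNorm f := by
  rw [normLAt, normAt_PhiMap, PhiMap_self]
  exact max_iSup_ne_eq_iSup _ hf.bddAbove_range_norm x (norm_nonneg _)

open Classical in
noncomputable def PhiMapInv (x : M) (g : M → Y) : M → Y :=
  fun x' => if x' = x then g x else (dist x' x)⁻¹ • (g x' - g x)

lemma PhiMap_PhiMapInv (x : M) (g : M → Y) : PhiMap x (PhiMapInv x g) = g := by
  funext x'
  by_cases h : x' = x
  · subst h
    simp [PhiMap, PhiMapInv]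
  · simp only [PhiMap, PhiMapInv, h, if_true, if_false, smul_smul,
      mul_inv_cancel₀ (dist_pos.2 h).ne', one_smul, sub_add_cancel]

lemma LipAt.isBddFun_PhiMapInv {x : M} {g : M → Y} (hg : LipAt x g) :
    IsBddFun (PhiMapInv x g) := by
  obtain ⟨k, -, hk⟩ := hg
  refine ⟨max k ‖g x‖, fun x' => ?_⟩
  by_cases h : x' = x
  · simp [PhiMapInv, h]
  · have hd : 0 < dist x' x := dist_pos.2 h
    simp only [PhiMapInv, h, if_false]
    rw [norm_smul, Real.norm_of_nonneg (inv_nonneg.2 hd.le), inv_mul_le_iff₀ hd, mul_comm]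
    exact (hk x').trans (mul_le_mul_of_nonneg_right (le_max_left _ _) hd.le)

end

theorem Phi_surjective_linear_isometry {M Y : Type*} [MetricSpace M]
    [NormedAddCommGroup Y] [NormedSpace ℝ Y] (x : M) :
    (∀ f : M → Y, IsBddFun f → LipAt x (PhiMap x f)) ∧
    (∀ f g : M → Y, PhiMap x (f + g) = PhiMap x f + PhiMap x g) ∧
    (∀ (c : ℝ) (f : M → Y), PhiMap x (c • f) = c • PhiMap x f) ∧
    (∀ f : M → Y, IsBddFun f → normLAt x (PhiMap x f) = supNorm f) ∧
    (∀ g : M → Y, LipAt x g → ∃ f : M → Y, IsBddFun f ∧ PhiMap x f = g) :=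
  ⟨fun _ hf => hf.lipAt_PhiMap x, PhiMap_add x, PhiMap_smul x,
    fun _ hf => hf.normLAt_PhiMap x,
    fun g hg => ⟨PhiMapInv x g, hg.isBddFun_PhiMapInv, PhiMap_PhiMapInv x g⟩⟩
end

section
/- Let X and Y be normed linear spaces and B_X the closed unit ball of X. Then (E(B_X, Y), ‖·‖_e) embeds isometrically and linearly into (E(X, Y), ‖·‖_e) via f ↦ f ∘ G, where G(x) = x for ‖x‖ ≤ 1 and G(x) = x/‖x‖ for ‖x‖ > 1. -/
section

variable {X Y : Type*} [NormedAddCommGroup X] [NormedSpace ℝ X]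
  [NormedAddCommGroup Y] [NormedSpace ℝ Y]

/-- The retraction `G : X → B_X`, `G x = x` if `‖x‖ ≤ 1` and `G x = x/‖x‖`
otherwise. -/
noncomputable def GMap (x : X) : (Metric.closedBall (0 : X) 1) :=
  if h : ‖x‖ ≤ 1 then ⟨x, by simpa [Metric.mem_closedBall, dist_zero_right] using h⟩
  else ⟨‖x‖⁻¹ • x, by
    push_neg at h
    have hx : ‖x‖ ≠ 0 := ne_of_gt (lt_trans one_pos h)
    simp [Metric.mem_closedBall, dist_zero_right, norm_smul,
      abs_of_nonneg (inv_nonneg.mpr (norm_nonneg x)), inv_mul_cancel₀ hx]⟩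

/-- The base point of `B_X`. -/
def ballZero : (Metric.closedBall (0 : X) 1) :=
  ⟨0, Metric.mem_closedBall_self zero_le_one⟩

/-- Extensive boundedness on `B_X`. -/
def ExtBddBall (f : (Metric.closedBall (0 : X) 1) → Y) : Prop :=
  ∃ k > (0 : ℝ), ∀ x, ‖f x‖ ≤ k * dist x (ballZero (X := X))

/-- Extensive boundedness on `X`. -/
def ExtBddX (f : X → Y) : Prop := ∃ k > (0 : ℝ), ∀ x : X, ‖f x‖ ≤ k * ‖x‖

/-- `‖·‖_e` on `E(B_X, Y)`. -/
noncomputable def eNormBall (f : (Metric.closedBall (0 : X) 1) → Y) : ℝ :=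
  ⨆ x : {x : (Metric.closedBall (0 : X) 1) // x ≠ ballZero (X := X)},
    ‖f x.1‖ / dist x.1 (ballZero (X := X))

/-- `‖·‖_e` on `E(X, Y)`. -/
noncomputable def eNormX (f : X → Y) : ℝ :=
  ⨆ x : {x : X // x ≠ 0}, ‖f x.1‖ / ‖x.1‖

end

/-! Since `‖G x‖ ≤ ‖x‖`, each quotient `‖f (G x)‖ / ‖x‖` is dominated by the quotient
`‖f (G x)‖ / ‖G x‖` of `f` at the point `G x` of `B_X`; conversely `G` is the identity on `B_X`,
so every quotient of `f` is a quotient of `f ∘ G`. Hence the two suprema agree. Injectivity of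
`f ↦ f ∘ G` is surjectivity of `G`. -/

open Function Set

theorem Real.iSup_eq_iSup_of_forall_exists_le {ι ι' : Sort*} {f : ι → ℝ} {g : ι' → ℝ}
    (hg : BddAbove (range g)) (hfg : ∀ i, ∃ j, f i ≤ g j) (hgf : ∀ j, ∃ i, g j ≤ f i) :
    ⨆ i, f i = ⨆ j, g j := by
  rcases isEmpty_or_nonempty ι with hι | hι
  · have : IsEmpty ι' := ⟨fun j => hι.false (hgf j).choose⟩
    rw [Real.iSup_of_isEmpty, Real.iSup_of_isEmpty]
  · have : Nonempty ι' := ⟨(hfg hι.some).choose⟩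
    obtain ⟨M, hM⟩ := hg
    have hf : BddAbove (range f) := ⟨M, by
      rintro _ ⟨i, rfl⟩
      obtain ⟨j, hj⟩ := hfg i
      exact hj.trans (hM ⟨j, rfl⟩)⟩
    exact le_antisymm (ciSup_mono_of_forall_exists ⟨M, hM⟩ hfg)
      (ciSup_mono_of_forall_exists hf hgf)

section BallZero

variable {X Y : Type*} [NormedAddCommGroup X] [NormedAddCommGroup Y]

@[simp]
theorem coe_ballZero : ((ballZero : Metric.closedBall (0 : X) 1) : X) = 0 := rfl

theorem dist_ballZero (y : Metric.closedBall (0 : X) 1) : dist y ballZero = ‖(y : X)‖ := by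
  rw [Subtype.dist_eq, coe_ballZero, dist_zero_right]

theorem ne_ballZero_iff {y : Metric.closedBall (0 : X) 1} : y ≠ ballZero ↔ (y : X) ≠ 0 := by
  rw [Ne, Subtype.ext_iff, coe_ballZero]

theorem ExtBddBall.bddAbove {f : Metric.closedBall (0 : X) 1 → Y} (hf : ExtBddBall f) :
    BddAbove (range fun y : {y : Metric.closedBall (0 : X) 1 // y ≠ ballZero} =>
      ‖f y.1‖ / dist y.1 ballZero) := by
  obtain ⟨k, -, hk⟩ := hf
  refine ⟨k, ?_⟩
  rintro _ ⟨⟨y, hy⟩, rfl⟩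
  have hpos : 0 < dist y ballZero := dist_pos.mpr hy
  exact (div_le_iff₀ hpos).mpr (hk y)

end BallZero

section GMap

variable {X Y : Type*} [NormedAddCommGroup X] [NormedSpace ℝ X] [NormedAddCommGroup Y]

theorem coe_GMap_of_norm_le {x : X} (hx : ‖x‖ ≤ 1) : (GMap x : X) = x := by
  rw [GMap, dif_pos hx]

theorem coe_GMap_of_one_lt_norm {x : X} (hx : 1 < ‖x‖) : (GMap x : X) = ‖x‖⁻¹ • x := by
  rw [GMap, dif_neg hx.not_ge]

theorem GMap_coe (y : Metric.closedBall (0 : X) 1) : GMap (y : X) = y :=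
  Subtype.ext <| coe_GMap_of_norm_le <| mem_closedBall_zero_iff.mp y.2

theorem GMap_surjective : Surjective (GMap : X → Metric.closedBall (0 : X) 1) :=
  LeftInverse.surjective GMap_coe

theorem norm_GMap_le (x : X) : ‖(GMap x : X)‖ ≤ ‖x‖ := by
  rcases le_or_gt ‖x‖ 1 with hx | hx
  · rw [coe_GMap_of_norm_le hx]
  · rw [coe_GMap_of_one_lt_norm hx, norm_smul, norm_inv, norm_norm,
      inv_mul_cancel₀ (by positivity)]
    exact hx.le

theorem GMap_ne_ballZero {x : X} (hx : x ≠ 0) : GMap x ≠ ballZero := by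
  rw [ne_ballZero_iff]
  rcases le_or_gt ‖x‖ 1 with hx' | hx'
  · rwa [coe_GMap_of_norm_le hx']
  · rw [coe_GMap_of_one_lt_norm hx']
    exact smul_ne_zero (inv_ne_zero (norm_ne_zero_iff.mpr hx)) hx

theorem ExtBddBall.comp_GMap {f : Metric.closedBall (0 : X) 1 → Y} (hf : ExtBddBall f) :
    ExtBddX fun x => f (GMap x) := by
  obtain ⟨k, hk₀, hk⟩ := hf
  refine ⟨k, hk₀, fun x => ?_⟩
  calc ‖f (GMap x)‖ ≤ k * ‖(GMap x : X)‖ := by simpa only [dist_ballZero] using hk (GMap x)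
    _ ≤ k * ‖x‖ := by gcongr; exact norm_GMap_le x

theorem eNormX_comp_GMap {f : Metric.closedBall (0 : X) 1 → Y} (hf : ExtBddBall f) :
    eNormX (fun x => f (GMap x)) = eNormBall f := by
  refine Real.iSup_eq_iSup_of_forall_exists_le hf.bddAbove ?_ ?_
  · rintro ⟨x, hx⟩
    refine ⟨⟨GMap x, GMap_ne_ballZero hx⟩, ?_⟩
    rw [dist_ballZero]
    exact div_le_div_of_nonneg_left (norm_nonneg _)
      (norm_pos_iff.mpr (ne_ballZero_iff.mp (GMap_ne_ballZero hx))) (norm_GMap_le x)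
  · rintro ⟨y, hy⟩
    exact ⟨⟨y, ne_ballZero_iff.mp hy⟩, by dsimp only; rw [GMap_coe, dist_ballZero]⟩

end GMap

/-- `(E(B_X,Y), ‖·‖_e)` embeds isometrically and linearly into `(E(X,Y), ‖·‖_e)`
via `f ↦ f ∘ G`. -/
theorem extBdd_ball_embeds {X Y : Type*} [NormedAddCommGroup X] [NormedSpace ℝ X]
    [NormedAddCommGroup Y] [NormedSpace ℝ Y] :
    (∀ f : (Metric.closedBall (0 : X) 1) → Y, ExtBddBall f →
      ExtBddX (fun x => f (GMap x)) (Y := Y)) ∧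
    (∀ f g : (Metric.closedBall (0 : X) 1) → Y,
      (fun x : X => (f + g) (GMap x)) =
        (fun x => f (GMap x)) + fun x => g (GMap x)) ∧
    (∀ (c : ℝ) (f : (Metric.closedBall (0 : X) 1) → Y),
      (fun x : X => (c • f) (GMap x)) = c • fun x => f (GMap x)) ∧
    (∀ f : (Metric.closedBall (0 : X) 1) → Y, ExtBddBall f →
      eNormX (fun x => f (GMap x)) = eNormBall f) ∧
    (∀ f g : (Metric.closedBall (0 : X) 1) → Y,
      (fun x : X => f (GMap x)) = (fun x : X => g (GMap x)) → f = g) :=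
  ⟨fun _ hf => hf.comp_GMap, fun _ _ => rfl, fun _ _ => rfl, fun _ hf => eNormX_comp_GMap hf,
    fun _ _ h => GMap_surjective.injective_comp_right h⟩
end

section
/- Let M be a pointed metric space with base point 0. For x ∈ M, the evaluation functional x̌ : M^e → ℝ, x̌(f) = f(x), is a bounded linear functional on M^e with ‖x̌‖ = d(x, 0). Moreover for any x, y ∈ M, ‖x̌ − y̌‖ ≥ d(x, y). -/
section

variable {M : Type*} [MetricSpace M]

/-- Membership in `M^e = E_c(M, ℝ)`: continuous, extensively bounded real
functions (with base point `z`; note the bound forces `f z = 0`). -/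
def MemEc (z : M) (f : M → ℝ) : Prop :=
  Continuous f ∧ ∃ k > (0 : ℝ), ∀ x : M, |f x| ≤ k * dist x z

/-- The norm `‖f‖_e` on `M^e`. -/
noncomputable def eNormR (z : M) (f : M → ℝ) : ℝ :=
  ⨆ x : {x : M // x ≠ z}, |f x.1| / dist x.1 z

end

/-! The upper bounds come from `|f t| ≤ ‖f‖_e d(t, 0)`, which is the definition of `‖f‖_e`.
They are attained by the `1`-Lipschitz functions `t ↦ d(t, y) - d(0, y)`: these lie in the unit
ball of `M^e`, and `f x - f y = d(x, y)` (for `y = 0`, `f x = d(x, 0)`). -/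

section

variable {M : Type*} [MetricSpace M] {z : M} {f : M → ℝ}

theorem MemEc.abs_le_eNormR_mul_dist (hf : MemEc z f) (t : M) :
    |f t| ≤ eNormR z f * dist t z := by
  obtain ⟨-, k, -, hk⟩ := hf
  rcases eq_or_ne t z with rfl | ht
  · simpa using hk t
  have hbdd : BddAbove (Set.range fun u : {u : M // u ≠ z} => |f u.1| / dist u.1 z) := by
    refine ⟨k, ?_⟩
    rintro _ ⟨u, rfl⟩
    exact (div_le_iff₀ (dist_pos.mpr u.2)).mpr (hk u.1)
  exact (div_le_iff₀ (dist_pos.mpr ht)).mp (le_ciSup hbdd ⟨t, ht⟩)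

theorem MemEc.abs_le_dist (hf : MemEc z f) (hf₁ : eNormR z f ≤ 1) (t : M) :
    |f t| ≤ dist t z :=
  calc |f t| ≤ eNormR z f * dist t z := hf.abs_le_eNormR_mul_dist t
    _ ≤ dist t z := mul_le_of_le_one_left dist_nonneg hf₁

theorem memEc_dist_sub_dist (z y : M) : MemEc z (fun t => dist t y - dist z y) :=
  ⟨(continuous_id.dist continuous_const).sub continuous_const, 1, one_pos,
    fun t => by simpa using abs_dist_sub_le t z y⟩

theorem eNormR_dist_sub_dist_le_one (z y : M) : eNormR z (fun t => dist t y - dist z y) ≤ 1 :=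
  Real.iSup_le (fun u => (div_le_one (dist_pos.mpr u.2)).mpr (abs_dist_sub_le u.1 z y))
    zero_le_one

end

/-- For `x ∈ M` the evaluation `x̌ : M^e → ℝ`, `x̌(f) = f(x)`, is a bounded
(linear) functional with dual norm `‖x̌‖ = d(x, 0)`; moreover
`‖x̌ - y̌‖ ≥ d(x,y)`. The dual norms are expressed as suprema over the unit
ball of `M^e`. -/
theorem evaluation_functional_norm {M : Type*} [MetricSpace M] (z x y : M) :
    (∀ f : M → ℝ, MemEc z f → |f x| ≤ eNormR z f * dist x z) ∧
    sSup {r : ℝ | ∃ f : M → ℝ, MemEc z f ∧ eNormR z f ≤ 1 ∧ r = |f x|} =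
      dist x z ∧
    dist x y ≤
      sSup {r : ℝ | ∃ f : M → ℝ, MemEc z f ∧ eNormR z f ≤ 1 ∧ r = |f x - f y|} := by
  have hx_bound : dist x z ∈ upperBounds
      {r : ℝ | ∃ f : M → ℝ, MemEc z f ∧ eNormR z f ≤ 1 ∧ r = |f x|} := by
    rintro _ ⟨f, hf, hf₁, rfl⟩
    exact hf.abs_le_dist hf₁ x
  refine ⟨fun f hf => hf.abs_le_eNormR_mul_dist x, le_antisymm ?_ ?_, ?_⟩
  · exact Real.sSup_le hx_bound dist_nonneg
  · refine le_csSup ⟨_, hx_bound⟩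
      ⟨_, memEc_dist_sub_dist z z, eNormR_dist_sub_dist_le_one z z, ?_⟩
    simp
  · refine le_csSup ⟨dist x z + dist y z, ?_⟩
      ⟨_, memEc_dist_sub_dist z y, eNormR_dist_sub_dist_le_one z y, ?_⟩
    · rintro _ ⟨f, hf, hf₁, rfl⟩
      exact (abs_sub _ _).trans (add_le_add (hf.abs_le_dist hf₁ x) (hf.abs_le_dist hf₁ y))
    · simp
end
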